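/- Let Z(α) = β₁ log U₁(ℓ₁(α)) + β₂ log U₂(ℓ₂(α)) where β₁, β₂ > 0, Uᵢ are sigmoidal utilities with parameters aᵢ, bᵢ > 0, and ℓᵢ(α) are affine functions of α with nonnegative values on [0,1]. Then Z is concave on [0,1]. -/

import Mathlib

/-!
The sigmoidal utility simplifies to `U(l) = (1 + e^{ab}) / (e^{ab} (1 + e^{a(l-b)}))`, so
`log U(l)` is a constant minus the softplus function `x ↦ log (1 + eˣ)` evaluated at the affine
argument `a (l - b)`. Softplus is convex because its derivative is the (increasing) logistic
sigmoid. Hence each `log Uᵢ(ℓᵢ(α))` is concave in `α`, and so is their positive combination `Z`.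
-/

open Real Set

lemma hasDerivAt_log_one_add_exp (x : ℝ) :
    HasDerivAt (fun x => log (1 + exp x)) (sigmoid x) x := by
  convert ((hasDerivAt_exp x).const_add 1).log (by positivity) using 1
  rw [sigmoid_def, exp_neg]
  field_simp
  ring

lemma convexOn_log_one_add_exp : ConvexOn ℝ univ (fun x : ℝ => log (1 + exp x)) := by
  have hderiv : deriv (fun x : ℝ => log (1 + exp x)) = sigmoid :=
    funext fun x => (hasDerivAt_log_one_add_exp x).deriv
  exact Monotone.convexOn_univ_of_deriv (fun x => (hasDerivAt_log_one_add_exp x).differentiableAt)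
    (hderiv ▸ sigmoid_monotone)

lemma ConcaveOn.comp_mul_add {f : ℝ → ℝ} (hf : ConcaveOn ℝ univ f) (p q : ℝ) :
    ConcaveOn ℝ univ (fun x => f (p * x + q)) := by
  have h := hf.comp_affineMap ((LinearMap.mul ℝ ℝ p).toAffineMap + AffineMap.const ℝ ℝ q)
  rw [preimage_univ] at h
  exact h

noncomputable def sigmoidUtility (a b l : ℝ) : ℝ :=
  1 - (1 + exp (a * b)) / exp (a * b) * (1 / (1 + exp (-a * (l - b))) - 1 / (1 + exp (a * b)))

lemma sigmoidUtility_eq (a b l : ℝ) :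
    sigmoidUtility a b l = (1 + exp (a * b)) / (exp (a * b) * (1 + exp (a * l + -(a * b)))) := by
  have hexp : exp (-a * (l - b)) = (exp (a * l + -(a * b)))⁻¹ := by
    rw [← exp_neg]
    congr 1
    ring
  rw [sigmoidUtility, hexp]
  field_simp
  ring

lemma log_sigmoidUtility (a b l : ℝ) :
    log (sigmoidUtility a b l) =
      log (1 + exp (a * b)) - a * b - log (1 + exp (a * l + -(a * b))) := by
  rw [sigmoidUtility_eq, log_div (by positivity) (by positivity),
    log_mul (by positivity) (by positivity), log_exp]
  ring

lemma concaveOn_log_sigmoidUtility (a b : ℝ) :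
    ConcaveOn ℝ univ (fun l => log (sigmoidUtility a b l)) := by
  refine ((convexOn_log_one_add_exp.neg.add_const (log (1 + exp (a * b)) - a * b)).comp_mul_add
    a (-(a * b))).congr fun l _ => ?_
  simp only [Pi.add_apply, Pi.neg_apply, log_sigmoidUtility]
  ring

theorem stmt_9_general (a₁ b₁ β₁ a₂ b₂ β₂ l₁₁ l₁₂ l₂₁ l₂₂ : ℝ)
    (hβ₁ : 0 < β₁) (hβ₂ : 0 < β₂)
    (c₁ d₁ c₂ d₂ : ℝ)
    (hc₁ : c₁ = (1 + Real.exp (a₁*b₁)) / Real.exp (a₁*b₁))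
    (hd₁ : d₁ = 1 / (1 + Real.exp (a₁*b₁)))
    (hc₂ : c₂ = (1 + Real.exp (a₂*b₂)) / Real.exp (a₂*b₂))
    (hd₂ : d₂ = 1 / (1 + Real.exp (a₂*b₂)))
    (U₁ U₂ : ℝ → ℝ)
    (hU₁ : ∀ l, U₁ l = 1 - c₁ * (1 / (1 + Real.exp (-a₁*(l-b₁))) - d₁))
    (hU₂ : ∀ l, U₂ l = 1 - c₂ * (1 / (1 + Real.exp (-a₂*(l-b₂))) - d₂))
    (Z : ℝ → ℝ)
    (hZ : ∀ α, Z α = β₁ * Real.log (U₁ (α * l₁₁ + (1-α) * l₁₂)) +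
                     β₂ * Real.log (U₂ ((1-α) * l₂₁ + α * l₂₂))) :
    ConcaveOn ℝ (Set.Icc 0 1) Z := by
  subst hc₁ hd₁ hc₂ hd₂
  obtain rfl : U₁ = sigmoidUtility a₁ b₁ := funext hU₁
  obtain rfl : U₂ = sigmoidUtility a₂ b₂ := funext hU₂
  have h₁ := ((concaveOn_log_sigmoidUtility a₁ b₁).comp_mul_add (l₁₁ - l₁₂) l₁₂).smul hβ₁.le
  have h₂ := ((concaveOn_log_sigmoidUtility a₂ b₂).comp_mul_add (l₂₂ - l₂₁) l₂₁).smul hβ₂.le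
  refine ((h₁.add h₂).subset (subset_univ _) (convex_Icc 0 1)).congr fun α _ => ?_
  have hℓ₁ : α * l₁₁ + (1 - α) * l₁₂ = (l₁₁ - l₁₂) * α + l₁₂ := by ring
  have hℓ₂ : (1 - α) * l₂₁ + α * l₂₂ = (l₂₂ - l₂₁) * α + l₂₁ := by ring
  rw [hZ, hℓ₁, hℓ₂]
  rfl

theorem stmt_9 (a₁ b₁ β₁ a₂ b₂ β₂ l₁₁ l₁₂ l₂₁ l₂₂ : ℝ)
    (ha₁ : 0 < a₁) (hb₁ : 0 < b₁) (hβ₁ : 0 < β₁)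
    (ha₂ : 0 < a₂) (hb₂ : 0 < b₂) (hβ₂ : 0 < β₂)
    (h11 : 0 ≤ l₁₁) (h12 : 0 ≤ l₁₂) (h21 : 0 ≤ l₂₁) (h22 : 0 ≤ l₂₂)
    (c₁ d₁ c₂ d₂ : ℝ)
    (hc₁ : c₁ = (1 + Real.exp (a₁*b₁)) / Real.exp (a₁*b₁))
    (hd₁ : d₁ = 1 / (1 + Real.exp (a₁*b₁)))
    (hc₂ : c₂ = (1 + Real.exp (a₂*b₂)) / Real.exp (a₂*b₂))
    (hd₂ : d₂ = 1 / (1 + Real.exp (a₂*b₂)))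
    (U₁ U₂ : ℝ → ℝ)
    (hU₁ : ∀ l, U₁ l = 1 - c₁ * (1 / (1 + Real.exp (-a₁*(l-b₁))) - d₁))
    (hU₂ : ∀ l, U₂ l = 1 - c₂ * (1 / (1 + Real.exp (-a₂*(l-b₂))) - d₂))
    (Z : ℝ → ℝ)
    (hZ : ∀ α, Z α = β₁ * Real.log (U₁ (α * l₁₁ + (1-α) * l₁₂)) +
                     β₂ * Real.log (U₂ ((1-α) * l₂₁ + α * l₂₂))) :
    ConcaveOn ℝ (Set.Icc 0 1) Z :=
  stmt_9_general a₁ b₁ β₁ a₂ b₂ β₂ l₁₁ l₁₂ l₂₁ l₂₂ hβ₁ hβ₂ c₁ d₁ c₂ d₂ hc₁ hd₁ hc₂ hd₂ U₁ U₂ hU₁ hU₂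
    Z hZ
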